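/- For the Kerr–(anti-)de Sitter black hole, for all m > 0 and all (r, θ) with r² + a²cos²θ > 0, the Abdelqader–Lake invariant Q₁ = (1/(3√3))·((I₁² − I₂²)(I₅ − I₆) + 4I₁I₂I₇)/(I₁² + I₂²)^{9/4} satisfies the closed-form identity Q₁(r, θ) = −E(r, θ)·(a²cos²θ − r²)/(3m(r² + a²cos²θ)^{3/2}); in particular Q₁ vanishes on the ergosurfaces E = 0 and on the cones r = ±a·cosθ. -/

import Mathlib

/-!
With `w = r + i a cos θ` one has `I₁ + i I₂ = Z(w) := 48 m² / w⁶`, so the numerator of `Q₁` is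
`Re (Z̄² ⟨∇Z, ∇Z⟩)` for the complex-bilinear pairing `⟨u, v⟩ = (Δ_r/ρ²) u_r v_r + (Δ_θ/ρ²) u_θ v_θ`.
As `∂_r w = 1` and `∂_θ w = -i a sin θ`, this pairing is
`Z'(w)² (Δ_r - a² sin²θ Δ_θ)/ρ² = Z'(w)² E/(3ρ²)`, and `Z̄² Z'²` is a positive multiple of `w̄²`,
whose real part is `r² - a² cos²θ`. The denominator is `|Z|^{9/2} = (48 m²/ρ⁶)^{9/4}`.
-/

noncomputable section

namespace KerrAdS

/-- `ρ² = r² + a² cos²θ` in Boyer–Lindquist coordinates. -/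
def rho2 (a r θ : ℝ) : ℝ := r ^ 2 + a ^ 2 * Real.cos θ ^ 2

/-- The complex combination `I₁ + i I₂ = 48 m² (r − i a cos θ)⁶ / ρ¹²`
(the orientation convention `I₁ + iI₂ = 48 Ψ₂²` with `Ψ₂ = −m/(r + i a cos θ)³`). -/
def Ic (a m r θ : ℝ) : ℂ :=
  48 * (m : ℂ) ^ 2 * ((r : ℂ) - Complex.I * ((a * Real.cos θ : ℝ) : ℂ)) ^ 6 /
    ((rho2 a r θ : ℝ) : ℂ) ^ 6

/-- The Weyl invariant `I₁ = C_{αβγδ} C^{αβγδ}` of the Kerr–(anti-)de Sitter black hole. -/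
def I1 (a m r θ : ℝ) : ℝ := (Ic a m r θ).re

/-- The Chern–Pontryagin invariant `I₂ = C*_{αβγδ} C^{αβγδ}`. -/
def I2 (a m r θ : ℝ) : ℝ := (Ic a m r θ).im

/-- `Δ_r = (1 − Λr²/3)(r² + a²) − 2mr`. -/
def Δr (a m Λ r : ℝ) : ℝ := (1 - Λ * r ^ 2 / 3) * (r ^ 2 + a ^ 2) - 2 * m * r

/-- `Δ_θ = 1 + (a²Λ/3) cos²θ`. -/
def Δθ (a Λ θ : ℝ) : ℝ := 1 + a ^ 2 * Λ / 3 * Real.cos θ ^ 2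

/-- The gradient invariant `I₅ = ∇_μ I₁ ∇^μ I₁
  = (Δ_r/ρ²)(∂_r I₁)² + (Δ_θ/ρ²)(∂_θ I₁)²`. -/
def I5 (a m Λ r θ : ℝ) : ℝ :=
  Δr a m Λ r / rho2 a r θ * (deriv (fun r' => I1 a m r' θ) r) ^ 2 +
    Δθ a Λ θ / rho2 a r θ * (deriv (fun θ' => I1 a m r θ') θ) ^ 2

/-- The gradient invariant `I₆ = ∇_μ I₂ ∇^μ I₂
  = (Δ_r/ρ²)(∂_r I₂)² + (Δ_θ/ρ²)(∂_θ I₂)²`. -/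
def I6 (a m Λ r θ : ℝ) : ℝ :=
  Δr a m Λ r / rho2 a r θ * (deriv (fun r' => I2 a m r' θ) r) ^ 2 +
    Δθ a Λ θ / rho2 a r θ * (deriv (fun θ' => I2 a m r θ') θ) ^ 2

/-- The gradient invariant `I₇ = ∇_μ I₁ ∇^μ I₂
  = (Δ_r/ρ²)(∂_r I₁)(∂_r I₂) + (Δ_θ/ρ²)(∂_θ I₁)(∂_θ I₂)`. -/
def I7 (a m Λ r θ : ℝ) : ℝ :=
  Δr a m Λ r / rho2 a r θ *
      (deriv (fun r' => I1 a m r' θ) r) * (deriv (fun r' => I2 a m r' θ) r) +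
    Δθ a Λ θ / rho2 a r θ *
      (deriv (fun θ' => I1 a m r θ') θ) * (deriv (fun θ' => I2 a m r θ') θ)

/-- The ergosurface polynomial
`E = Λa⁴c⁴ − Λa⁴c² − Λa²r² − Λr⁴ + 3a²c² − 6mr + 3r²`, `c = cos θ`. -/
def E (a m Λ r θ : ℝ) : ℝ :=
  Λ * a ^ 4 * Real.cos θ ^ 4 - Λ * a ^ 4 * Real.cos θ ^ 2 - Λ * a ^ 2 * r ^ 2 - Λ * r ^ 4 +
    3 * a ^ 2 * Real.cos θ ^ 2 - 6 * m * r + 3 * r ^ 2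

/-- The differential Weyl invariant `I₃ = ∇_μ C_{αβγδ} ∇^μ C^{αβγδ}`
(explicit closed form). -/
def I3 (a m Λ r θ : ℝ) : ℝ :=
  240 * m ^ 2 / rho2 a r θ ^ 9 *
    (a ^ 4 * Real.cos θ ^ 4 - 4 * a ^ 3 * Real.cos θ ^ 3 * r
      - 6 * a ^ 2 * Real.cos θ ^ 2 * r ^ 2 + 4 * a * Real.cos θ * r ^ 3 + r ^ 4) *
    (a ^ 4 * Real.cos θ ^ 4 + 4 * a ^ 3 * Real.cos θ ^ 3 * r
      - 6 * a ^ 2 * Real.cos θ ^ 2 * r ^ 2 - 4 * a * Real.cos θ * r ^ 3 + r ^ 4) *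
    E a m Λ r θ

/-- The mixed differential Weyl invariant `I₄ = ∇_μ C_{αβγδ} ∇^μ C*^{αβγδ}`
(explicit closed form). -/
def I4 (a m Λ r θ : ℝ) : ℝ :=
  1920 * a * Real.cos θ * r * m ^ 2 / rho2 a r θ ^ 9 * E a m Λ r θ *
    (a ^ 2 * Real.cos θ ^ 2 - 2 * a * Real.cos θ * r - r ^ 2) *
    (a ^ 2 * Real.cos θ ^ 2 + 2 * a * Real.cos θ * r - r ^ 2) *
    (a ^ 2 * Real.cos θ ^ 2 - r ^ 2)

end KerrAdS

namespace KerrAdS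

/-- The Abdelqader–Lake invariant
`Q₁ = (1/(3√3)) ((I₁² − I₂²)(I₅ − I₆) + 4I₁I₂I₇)/(I₁² + I₂²)^{9/4}`. -/
def Q1 (a m Λ r θ : ℝ) : ℝ :=
  1 / (3 * Real.sqrt 3) *
    ((I1 a m r θ ^ 2 - I2 a m r θ ^ 2) * (I5 a m Λ r θ - I6 a m Λ r θ) +
      4 * I1 a m r θ * I2 a m r θ * I7 a m Λ r θ) /
    (I1 a m r θ ^ 2 + I2 a m r θ ^ 2) ^ ((9 : ℝ) / 4)

open Complex (I normSq)
open ComplexConjugate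

def complexRadius (a r θ : ℝ) : ℂ := r + (a * Real.cos θ : ℝ) * I

lemma complexRadius_re (a r θ : ℝ) : (complexRadius a r θ).re = r := by simp [complexRadius]

lemma complexRadius_im (a r θ : ℝ) : (complexRadius a r θ).im = a * Real.cos θ := by
  simp only [complexRadius, Complex.add_im, Complex.ofReal_im, Complex.mul_I_im, Complex.ofReal_re,
    zero_add]

lemma normSq_complexRadius (a r θ : ℝ) : normSq (complexRadius a r θ) = rho2 a r θ := by
  rw [complexRadius, Complex.normSq_add_mul_I, rho2]
  ring

lemma complexRadius_ne_zero {a r θ : ℝ} (h : 0 < rho2 a r θ) : complexRadius a r θ ≠ 0 := by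
  rw [← normSq_complexRadius] at h
  exact Complex.normSq_pos.mp h

lemma Ic_eq (a m r θ : ℝ) : Ic a m r θ = ((48 * m ^ 2 : ℝ) : ℂ) / complexRadius a r θ ^ 6 := by
  have hconj : (r : ℂ) - I * ((a * Real.cos θ : ℝ) : ℂ) = conj (complexRadius a r θ) := by
    simp [complexRadius, Complex.ext_iff]
  rw [Ic, hconj, ← normSq_complexRadius, Complex.normSq_eq_conj_mul_self]
  generalize complexRadius a r θ = w
  rcases eq_or_ne w 0 with hw | hw
  · simp [hw]
  · have : conj w ≠ 0 := (map_ne_zero _).mpr hw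
    push_cast
    field_simp

lemma hasDerivAt_div_pow_six (c : ℂ) {w : ℂ} (hw : w ≠ 0) :
    HasDerivAt (fun z => c / z ^ 6) (-6 * c / w ^ 7) w := by
  refine ((hasDerivAt_const w c).div (hasDerivAt_pow 6 w) (pow_ne_zero 6 hw)).congr_deriv ?_
  field_simp
  ring

lemma hasDerivAt_complexRadius_r (a r θ : ℝ) :
    HasDerivAt (fun r' => complexRadius a r' θ) 1 r :=
  Complex.ofRealCLM.hasDerivAt.add_const _

lemma hasDerivAt_complexRadius_θ (a r θ : ℝ) :
    HasDerivAt (fun θ' => complexRadius a r θ') (-(a * Real.sin θ : ℝ) * I) θ := by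
  refine ((((Real.hasDerivAt_cos θ).const_mul a).ofReal_comp.mul_const I).const_add
    (r : ℂ)).congr_deriv ?_
  push_cast
  ring

lemma hasDerivAt_re_comp {f : ℝ → ℂ} {f' : ℂ} {x : ℝ} (hf : HasDerivAt f f' x) :
    HasDerivAt (fun y => (f y).re) f'.re x :=
  Complex.reCLM.hasFDerivAt.comp_hasDerivAt x hf

lemma hasDerivAt_im_comp {f : ℝ → ℂ} {f' : ℂ} {x : ℝ} (hf : HasDerivAt f f' x) :
    HasDerivAt (fun y => (f y).im) f'.im x :=
  Complex.imCLM.hasFDerivAt.comp_hasDerivAt x hf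

lemma re_conj_sq_mul (z u v : ℂ) (α β : ℝ) :
    (z.re ^ 2 - z.im ^ 2) * ((α * u.re ^ 2 + β * v.re ^ 2) - (α * u.im ^ 2 + β * v.im ^ 2)) +
        4 * z.re * z.im * (α * u.re * u.im + β * v.re * v.im) =
      (conj z ^ 2 * (α * u ^ 2 + β * v ^ 2)).re := by
  simp only [pow_two, Complex.mul_re, Complex.mul_im, Complex.add_re, Complex.add_im,
    Complex.conj_re, Complex.conj_im, Complex.ofReal_re, Complex.ofReal_im]
  ring

lemma conj_div_pow_six_sq_mul_sq (c : ℝ) {w : ℂ} (hw : w ≠ 0) :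
    conj ((c : ℂ) / w ^ 6) ^ 2 * (-6 * c / w ^ 7) ^ 2 =
      ((36 * c ^ 4 / normSq w ^ 14 : ℝ) : ℂ) * conj w ^ 2 := by
  have : conj w ≠ 0 := (map_ne_zero _).mpr hw
  simp only [map_div₀, map_pow, Complex.conj_ofReal]
  push_cast
  rw [Complex.normSq_eq_conj_mul_self]
  field_simp
  ring

lemma normSq_div_pow (c : ℝ) (w : ℂ) :
    normSq ((c : ℂ) / w ^ 6) = c ^ 2 / normSq w ^ 6 := by
  simp [map_div₀, Complex.normSq_ofReal, sq]

lemma E_eq (a m Λ r θ : ℝ) :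
    E a m Λ r θ = 3 * (Δr a m Λ r - (a * Real.sin θ) ^ 2 * Δθ a Λ θ) := by
  unfold Δr Δθ E
  linear_combination (3 * a ^ 2 * (1 + a ^ 2 * Λ / 3 * Real.cos θ ^ 2)) * Real.sin_sq θ

lemma hasDerivAt_Ic_r {a m r θ : ℝ} (hw : complexRadius a r θ ≠ 0) :
    HasDerivAt (fun r' => Ic a m r' θ)
      (-6 * ((48 * m ^ 2 : ℝ) : ℂ) / complexRadius a r θ ^ 7) r := by
  have hcomp : (fun r' => Ic a m r' θ) =
      (fun z => ((48 * m ^ 2 : ℝ) : ℂ) / z ^ 6) ∘ fun r' => complexRadius a r' θ :=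
    funext fun r' => Ic_eq a m r' θ
  rw [hcomp]
  simpa using (hasDerivAt_div_pow_six _ hw).comp r (hasDerivAt_complexRadius_r a r θ)

lemma hasDerivAt_Ic_θ {a m r θ : ℝ} (hw : complexRadius a r θ ≠ 0) :
    HasDerivAt (fun θ' => Ic a m r θ')
      (-6 * ((48 * m ^ 2 : ℝ) : ℂ) / complexRadius a r θ ^ 7 * (-(a * Real.sin θ : ℝ) * I)) θ := by
  have hcomp : (fun θ' => Ic a m r θ') =
      (fun z => ((48 * m ^ 2 : ℝ) : ℂ) / z ^ 6) ∘ fun θ' => complexRadius a r θ' :=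
    funext fun θ' => Ic_eq a m r θ'
  rw [hcomp]
  exact (hasDerivAt_div_pow_six _ hw).comp θ (hasDerivAt_complexRadius_θ a r θ)

lemma Q1_eq_re_conj_sq_mul {a m Λ r θ : ℝ} (hw : complexRadius a r θ ≠ 0) :
    Q1 a m Λ r θ = 1 / (3 * Real.sqrt 3) *
      (conj (Ic a m r θ) ^ 2 *
        ((Δr a m Λ r / rho2 a r θ : ℝ) *
            (-6 * ((48 * m ^ 2 : ℝ) : ℂ) / complexRadius a r θ ^ 7) ^ 2 +
          (Δθ a Λ θ / rho2 a r θ : ℝ) *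
            (-6 * ((48 * m ^ 2 : ℝ) : ℂ) / complexRadius a r θ ^ 7 *
              (-(a * Real.sin θ : ℝ) * I)) ^ 2)).re /
      normSq (Ic a m r θ) ^ ((9 : ℝ) / 4) := by
  have h1r : deriv (fun r' => I1 a m r' θ) r = _ := (hasDerivAt_re_comp (hasDerivAt_Ic_r hw)).deriv
  have h2r : deriv (fun r' => I2 a m r' θ) r = _ := (hasDerivAt_im_comp (hasDerivAt_Ic_r hw)).deriv
  have h1θ : deriv (fun θ' => I1 a m r θ') θ = _ :=
    (hasDerivAt_re_comp (hasDerivAt_Ic_θ hw)).deriv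
  have h2θ : deriv (fun θ' => I2 a m r θ') θ = _ :=
    (hasDerivAt_im_comp (hasDerivAt_Ic_θ hw)).deriv
  rw [← re_conj_sq_mul, Complex.normSq_apply, Q1, I5, I6, I7, h1r, h2r, h1θ, h2θ, I1, I2]
  ring_nf

lemma gradient_pairing_eq (a m Λ r θ : ℝ) (Z' : ℂ) :
    (Δr a m Λ r / rho2 a r θ : ℝ) * Z' ^ 2 +
        (Δθ a Λ θ / rho2 a r θ : ℝ) * (Z' * (-(a * Real.sin θ : ℝ) * I)) ^ 2 =
      ((E a m Λ r θ / (3 * rho2 a r θ) : ℝ) : ℂ) * Z' ^ 2 := by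
  rw [E_eq]
  generalize a * Real.sin θ = s
  push_cast
  linear_combination ((Δθ a Λ θ : ℂ) / rho2 a r θ * s ^ 2 * Z' ^ 2) * Complex.I_sq

lemma re_conj_sq (w : ℂ) : (conj w ^ 2).re = w.re ^ 2 - w.im ^ 2 := by
  simp [pow_two, Complex.mul_re]

lemma rpow_three_halves_sq {P : ℝ} (hP : 0 ≤ P) : (P ^ ((3 : ℝ) / 2)) ^ 2 = P ^ 3 := by
  rw [← Real.rpow_natCast, ← Real.rpow_mul hP]
  norm_num

lemma rpow_nine_fourths {m P : ℝ} (hm : 0 < m) (hP : 0 < P) :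
    ((48 * m ^ 2) ^ 2 / P ^ 6) ^ ((9 : ℝ) / 4) =
      (4 * Real.sqrt 3 * m / P ^ ((3 : ℝ) / 2)) ^ 9 := by
  have h3 : Real.sqrt 3 ^ 2 = 3 := Real.sq_sqrt (by norm_num)
  have hs := rpow_three_halves_sq hP.le
  have ht : (48 * m ^ 2) ^ 2 / P ^ 6 = (4 * Real.sqrt 3 * m / P ^ ((3 : ℝ) / 2)) ^ 4 := by
    rw [div_pow, show (P ^ ((3 : ℝ) / 2)) ^ 4 = ((P ^ ((3 : ℝ) / 2)) ^ 2) ^ 2 by ring, hs]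
    linear_combination (-(16 * m ^ 2) ^ 2 / P ^ 6 * (Real.sqrt 3 ^ 2 + 3)) * h3
  rw [ht, ← Real.rpow_natCast, ← Real.rpow_mul (by positivity)]
  norm_num

lemma Q1_eq {a m Λ r θ : ℝ} (hm : 0 < m) (h : 0 < rho2 a r θ) :
    Q1 a m Λ r θ =
      -(E a m Λ r θ * (a ^ 2 * Real.cos θ ^ 2 - r ^ 2)) / (3 * m * rho2 a r θ ^ ((3 : ℝ) / 2)) := by
  have hw := complexRadius_ne_zero h
  rw [Q1_eq_re_conj_sq_mul hw, gradient_pairing_eq, Ic_eq, mul_left_comm,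
    conj_div_pow_six_sq_mul_sq _ hw, Complex.re_ofReal_mul, Complex.re_ofReal_mul, re_conj_sq,
    complexRadius_re, complexRadius_im, normSq_div_pow, normSq_complexRadius, rpow_nine_fourths hm h]
  have h3 : Real.sqrt 3 ^ 2 = 3 := Real.sq_sqrt (by norm_num)
  have hs := rpow_three_halves_sq h.le
  have hs0 : 0 < rho2 a r θ ^ ((3 : ℝ) / 2) := by positivity
  generalize rho2 a r θ ^ ((3 : ℝ) / 2) = s at hs hs0
  field_simp
  rw [show s ^ 10 = (s ^ 2) ^ 5 by ring, hs, show √3 ^ 10 = (√3 ^ 2) ^ 5 by ring, h3]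
  ring

/-- For the Kerr–(anti-)de Sitter black hole with `m > 0`, the
Abdelqader–Lake invariant `Q₁` has the stated closed form; in particular `Q₁` vanishes
on the ergosurfaces `E = 0` and on the cones `r = ± a cos θ`. -/
theorem Q1_closed_form (a m Λ : ℝ) (hm : 0 < m) (r θ : ℝ) (h : 0 < rho2 a r θ) :
    Q1 a m Λ r θ =
      -(E a m Λ r θ * (a ^ 2 * Real.cos θ ^ 2 - r ^ 2)) /
        (3 * m * rho2 a r θ ^ ((3 : ℝ) / 2)) ∧
    (E a m Λ r θ = 0 → Q1 a m Λ r θ = 0) ∧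
    ((r = a * Real.cos θ ∨ r = -(a * Real.cos θ)) → Q1 a m Λ r θ = 0) := by
  have key := Q1_eq (Λ := Λ) hm h
  refine ⟨key, fun hE => by rw [key, hE]; simp, fun hr => ?_⟩
  have hcone : a ^ 2 * Real.cos θ ^ 2 - r ^ 2 = 0 := by
    rcases hr with rfl | rfl <;> ring
  rw [key, hcone]
  simp

end KerrAdS
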